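/- arXiv:2104.12082 — 2 statements merged into one kernel-verified Lean document; each statement's English description precedes it below -/
import Mathlib

section
/- Let G be a non-hyperenergetic graph of order p ≥ 1, i.e., ε(G) ≤ 2(p−1), and let m ≥ 14. Then the Kronecker product K_{1,m} × G is hypoenergetic, i.e., ε(K_{1,m} × G) < p(m+1). -/
open Matrix SimpleGraph Finset

variable {V W : Type*}

/-- The adjacency matrix of a simple graph over ℝ is Hermitian. -/
lemma adjMatrix_isHermitian [Fintype V] [DecidableEq V] (G : SimpleGraph V)
    [DecidableRel G.Adj] : (G.adjMatrix ℝ).IsHermitian := by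
  rw [Matrix.IsHermitian, Matrix.conjTranspose_eq_transpose_of_trivial]
  exact G.isSymm_adjMatrix

/-- The energy of a finite simple graph: the sum of the absolute values of the
eigenvalues of its real adjacency matrix. -/
noncomputable def graphEnergy [Fintype V] [DecidableEq V] (G : SimpleGraph V) : ℝ := by
  classical
  exact ∑ i, |(adjMatrix_isHermitian G).eigenvalues i|

/-- The spectrum of a finite simple graph: the multiset of eigenvalues (with
multiplicity) of its real adjacency matrix. -/
noncomputable def graphSpectrum [Fintype V] [DecidableEq V] (G : SimpleGraph V) : Multiset ℝ := by
  classical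
  exact Finset.univ.val.map (adjMatrix_isHermitian G).eigenvalues

/-- A graph is integral if every eigenvalue of its adjacency matrix is an integer. -/
def IsIntegralGraph [Fintype V] [DecidableEq V] (G : SimpleGraph V) : Prop :=
  ∀ x ∈ graphSpectrum G, ∃ k : ℤ, x = (k : ℝ)

/-- The m-shadow graph of `G`, on vertex set `Fin m × V`: `(i,u)` and `(j,v)` are
adjacent iff `u` and `v` are adjacent in `G`. -/
def shadowGraph (m : ℕ) (G : SimpleGraph V) : SimpleGraph (Fin m × V) where
  Adj x y := G.Adj x.2 y.2
  symm := ⟨fun _ _ h => h.symm⟩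
  loopless := ⟨fun _ h => G.loopless.irrefl _ h⟩

/-- The duplicate graph of `G`, on vertex set `V ⊕ V`: `inl a` is adjacent to
`inr b` iff `a` and `b` are adjacent in `G`; no other adjacencies. -/
def duplicateGraph (G : SimpleGraph V) : SimpleGraph (V ⊕ V) where
  Adj x y :=
    match x, y with
    | Sum.inl a, Sum.inr b => G.Adj a b
    | Sum.inr a, Sum.inl b => G.Adj a b
    | _, _ => False
  symm := ⟨by rintro (a | a) (b | b) h <;> first | exact h.symm | exact h.elim⟩
  loopless := ⟨by rintro (a | a) h <;> exact h⟩

/-- The Kronecker (tensor) product of two simple graphs. -/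
def tensorGraph (G : SimpleGraph V) (H : SimpleGraph W) : SimpleGraph (V × W) where
  Adj x y := G.Adj x.1 y.1 ∧ H.Adj x.2 y.2
  symm := ⟨fun _ _ h => ⟨h.1.symm, h.2.symm⟩⟩
  loopless := ⟨fun _ h => G.loopless.irrefl _ h.1⟩

/-- The m-splitting graph of `G`, on vertex set `V ⊕ (Fin m × V)`: original
vertices keep their adjacencies, an original vertex `u` is adjacent to a copy
`(i,v)` iff `u` is adjacent to `v` in `G`, and copies are pairwise non-adjacent. -/
def splittingGraph (m : ℕ) (G : SimpleGraph V) : SimpleGraph (V ⊕ (Fin m × V)) where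
  Adj x y :=
    match x, y with
    | Sum.inl u, Sum.inl v => G.Adj u v
    | Sum.inl u, Sum.inr iv => G.Adj u iv.2
    | Sum.inr iu, Sum.inl v => G.Adj iu.2 v
    | Sum.inr _, Sum.inr _ => False
  symm := ⟨by rintro (u | iu) (v | iv) h <;> first | exact h.symm | exact h.elim⟩
  loopless := ⟨by rintro (u | iu) h <;> first | exact G.loopless.irrefl _ h | exact h⟩

/-- The join of two simple graphs: their disjoint union together with all edges
between the two parts. -/
def joinGraph (G : SimpleGraph V) (H : SimpleGraph W) : SimpleGraph (V ⊕ W) where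
  Adj x y :=
    match x, y with
    | Sum.inl a, Sum.inl b => G.Adj a b
    | Sum.inr a, Sum.inr b => H.Adj a b
    | _, _ => True
  symm := ⟨by rintro (a | a) (b | b) h <;> first | exact h.symm | trivial⟩
  loopless := ⟨by rintro (a | a) h <;> first | exact G.loopless.irrefl _ h | exact H.loopless.irrefl _ h⟩

/-- The superpath graph on a sequence of part sizes: independent sets `W i` of
size `a i`, where vertices in parts `i` and `j` are adjacent iff `|i - j| = 1`. -/
def superpathGraph {t : ℕ} (a : Fin t → ℕ) : SimpleGraph (Σ i : Fin t, Fin (a i)) where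
  Adj x y := (x.1 : ℕ) + 1 = (y.1 : ℕ) ∨ (y.1 : ℕ) + 1 = (x.1 : ℕ)
  symm := ⟨fun _ _ h => h.symm⟩
  loopless := ⟨fun x h => by omega⟩

/-! The adjacency matrix of a Kronecker product of graphs is the Kronecker product of the
adjacency matrices; diagonalising both factors by unitaries shows that its eigenvalues are the
products `λ i * μ j`, so graph energy is multiplicative: `ε(K_{1,m} × G) = ε(K_{1,m}) ε(G)`.
The star has characteristic polynomial `X ^ (m - 1) * (X ^ 2 - m)`, hence energy `2 √m`, and
for `m ≥ 14` we have `4 √m ≤ m + 1`, so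
`ε(K_{1,m} × G) ≤ 4 √m (p - 1) ≤ (m + 1)(p - 1) < p (m + 1)`. -/

open Polynomial
open scoped Kronecker

namespace Matrix.IsHermitian

variable {𝕜 m n : Type*} [RCLike 𝕜] [Fintype m] [DecidableEq m] [Fintype n] [DecidableEq n]

theorem sum_abs_eigenvalues_of_charpoly_eq {A : Matrix n n 𝕜} (hA : A.IsHermitian)
    (s : Multiset ℝ) (h : A.charpoly = (s.map fun a : ℝ => X - C (a : 𝕜)).prod) :
    ∑ i, |hA.eigenvalues i| = (s.map abs).sum := by
  have hroots : univ.val.map hA.eigenvalues = s := by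
    apply Multiset.map_injective (RCLike.ofReal_injective (K := 𝕜))
    have hs : (s.map fun a : ℝ => X - C (a : 𝕜))
        = (s.map RCLike.ofReal).map fun a => X - C a := by
      rw [Multiset.map_map]
      rfl
    rw [Multiset.map_map, ← hA.roots_charpoly_eq_eigenvalues, h, hs, roots_multiset_prod_X_sub_C]
  rw [← hroots, Multiset.map_map]
  rfl

theorem charpoly_kronecker {A : Matrix m m 𝕜} {B : Matrix n n 𝕜} (hA : A.IsHermitian)
    (hB : B.IsHermitian) :
    (A ⊗ₖ B).charpoly
      = ∏ p : m × n, (X - C ((hA.eigenvalues p.1 * hB.eigenvalues p.2 : ℝ) : 𝕜)) := by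
  set U : Matrix m m 𝕜 := ↑hA.eigenvectorUnitary
  set W : Matrix n n 𝕜 := ↑hB.eigenvectorUnitary
  have hUW : star (U ⊗ₖ W) * (U ⊗ₖ W) = 1 :=
    (kronecker_mem_unitary hA.eigenvectorUnitary.2 hB.eigenvectorUnitary.2).1
  have hAB : A ⊗ₖ B = (U ⊗ₖ W) *
      diagonal (fun p : m × n => ((hA.eigenvalues p.1 * hB.eigenvalues p.2 : ℝ) : 𝕜)) *
      star (U ⊗ₖ W) := by
    have hA' := hA.spectral_theorem
    have hB' := hB.spectral_theorem
    rw [Unitary.conjStarAlgAut_apply] at hA' hB'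
    conv_lhs => rw [hA', hB']
    simp [mul_kronecker_mul, diagonal_kronecker_diagonal, star_eq_conjTranspose,
      conjTranspose_kronecker, U, W]
  rw [hAB, charpoly_mul_comm, ← mul_assoc, hUW, one_mul, charpoly_diagonal]

end Matrix.IsHermitian

theorem adjMatrix_tensorGraph {α : Type*} [MulZeroOneClass α] (G : SimpleGraph V)
    (H : SimpleGraph W) [DecidableRel G.Adj] [DecidableRel H.Adj]
    [DecidableRel (tensorGraph G H).Adj] :
    (tensorGraph G H).adjMatrix α = G.adjMatrix α ⊗ₖ H.adjMatrix α := by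
  ext x y
  rw [adjMatrix_apply, kroneckerMap_apply, adjMatrix_apply, adjMatrix_apply,
    ite_zero_mul_ite_zero, mul_one]
  exact if_congr Iff.rfl rfl rfl

section Energy

variable [Fintype V] [DecidableEq V]

theorem graphEnergy_eq_sum_abs_eigenvalues (G : SimpleGraph V) [DecidableRel G.Adj] :
    graphEnergy G = ∑ i, |(adjMatrix_isHermitian G).eigenvalues i| := by
  unfold graphEnergy
  congr!

theorem graphEnergy_tensorGraph [Fintype W] [DecidableEq W] (G : SimpleGraph V)
    (H : SimpleGraph W) :
    graphEnergy (tensorGraph G H) = graphEnergy G * graphEnergy H := by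
  classical
  simp only [graphEnergy_eq_sum_abs_eigenvalues]
  rw [(adjMatrix_isHermitian _).sum_abs_eigenvalues_of_charpoly_eq (univ.val.map fun p : V × W =>
      (adjMatrix_isHermitian G).eigenvalues p.1 * (adjMatrix_isHermitian H).eigenvalues p.2)]
  · simp [sum_mul_sum, Fintype.sum_prod_type, abs_mul]
  · rw [adjMatrix_tensorGraph,
      (adjMatrix_isHermitian G).charpoly_kronecker (adjMatrix_isHermitian H), Multiset.map_map]
    rfl

end Energy

theorem charpoly_adjMatrix_star {m : ℕ} (hm : m ≠ 0)
    [DecidableRel (completeBipartiteGraph (Fin 1) (Fin m)).Adj] :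
    ((completeBipartiteGraph (Fin 1) (Fin m)).adjMatrix ℝ).charpoly
      = X ^ (m - 1) * (X ^ 2 - C (m : ℝ)) := by
  -- The Schur complement needs the leaf block `scalar _ x` invertible: compare at `x ≠ 0`.
  refine eq_of_infinite_eval_eq _ _ ((Set.finite_singleton 0).infinite_compl.mono ?_)
  intro x (hx : x ≠ 0)
  let J : Matrix (Fin 1) (Fin m) ℝ := of fun _ _ => 1
  have hblocks : scalar _ x - (completeBipartiteGraph (Fin 1) (Fin m)).adjMatrix ℝ
      = fromBlocks (scalar _ x) (-J) (-Jᵀ) (scalar _ x) := by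
    ext (i | i) (j | j) <;> simp [J, diagonal_apply]
  have : Invertible x := invertibleOfNonzero hx
  let _ := this.map (scalar (Fin m))
  have hschur : (scalar (Fin 1) x - -J * ⅟(scalar (Fin m) x) * -Jᵀ).det = x - m * x⁻¹ := by
    rw [det_unique, ← map_invOf]
    simp [J, mul_apply, diagonal_apply]
  show _ = _
  rw [eval_charpoly, hblocks, det_fromBlocks₂₂, hschur]
  obtain ⟨k, rfl⟩ := Nat.exists_eq_add_one_of_ne_zero hm
  simp only [scalar_apply, det_diagonal, prod_const, card_univ, Fintype.card_fin,
    add_tsub_cancel_right, eval_mul, eval_pow, eval_X, eval_sub, eval_C]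
  field_simp
  ring

theorem graphEnergy_star {m : ℕ} (hm : m ≠ 0) :
    graphEnergy (completeBipartiteGraph (Fin 1) (Fin m)) = 2 * √m := by
  classical
  rw [graphEnergy_eq_sum_abs_eigenvalues,
    (adjMatrix_isHermitian _).sum_abs_eigenvalues_of_charpoly_eq
      (√m ::ₘ -√m ::ₘ Multiset.replicate (m - 1) 0)]
  · simp only [Multiset.map_cons, abs_of_nonneg (Real.sqrt_nonneg _), abs_neg,
      Multiset.map_replicate, abs_zero, Multiset.sum_cons, Multiset.sum_replicate, nsmul_zero,
      add_zero]
    ring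
  · have hsq : C (m : ℝ) = C √m * C √m := by
      rw [← C_mul, Real.mul_self_sqrt m.cast_nonneg]
    rw [charpoly_adjMatrix_star hm, hsq]
    simp only [Real.ringHom_apply, Multiset.map_cons, map_neg, sub_neg_eq_add,
      Multiset.map_replicate, map_zero, sub_zero, Multiset.prod_cons, Multiset.prod_replicate]
    ring

theorem four_mul_sqrt_le_add_one {x : ℝ} (hx : 14 ≤ x) : 4 * √x ≤ x + 1 := by
  nlinarith [Real.sq_sqrt (by linarith : 0 ≤ x), Real.sqrt_nonneg x]

theorem tensor_star_nonhyperenergetic_hypoenergetic_general [Fintype V] [DecidableEq V]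
    (G : SimpleGraph V) (p m : ℕ) (hp1 : 1 ≤ p)
    (hm : 14 ≤ m) (hG : graphEnergy G ≤ 2 * ((p : ℝ) - 1)) :
    graphEnergy (tensorGraph (completeBipartiteGraph (Fin 1) (Fin m)) G)
      < (p : ℝ) * (m + 1) := by
  rw [graphEnergy_tensorGraph, graphEnergy_star (by omega)]
  have hp : (0 : ℝ) ≤ p - 1 := by
    rw [sub_nonneg]
    exact_mod_cast hp1
  calc 2 * √m * graphEnergy G ≤ 2 * √m * (2 * (p - 1)) := by gcongr
    _ = 4 * √m * (p - 1) := by ring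
    _ ≤ (m + 1) * (p - 1) := by
      gcongr
      exact four_mul_sqrt_le_add_one (by exact_mod_cast hm)
    _ < p * (m + 1) := by linarith [m.cast_nonneg (α := ℝ)]

/-- If `G` is a non-hyperenergetic graph of order `p ≥ 1` (i.e. `ε(G) ≤ 2(p-1)`)
and `m ≥ 14`, then the Kronecker product `K_{1,m} × G` is hypoenergetic: its
energy is less than its order `p * (m + 1)`. -/
theorem tensor_star_nonhyperenergetic_hypoenergetic [Fintype V] [DecidableEq V]
    (G : SimpleGraph V) (p m : ℕ) (hp : Fintype.card V = p) (hp1 : 1 ≤ p)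
    (hm : 14 ≤ m) (hG : graphEnergy G ≤ 2 * ((p : ℝ) - 1)) :
    graphEnergy (tensorGraph (completeBipartiteGraph (Fin 1) (Fin m)) G)
      < (p : ℝ) * (m + 1) :=
  tensor_star_nonhyperenergetic_hypoenergetic_general G p m hp1 hm hG
end

section
/- Let G be a hypoenergetic graph of order p. Then the 2-splitting graph spl₂(G) and the 3-shadow graph D₃(G) are equihypoenergetic: both have 3p vertices, their energies are equal (both equal 3·ε(G)), and both are hypoenergetic, i.e., 3·ε(G) < 3p. -/
open Matrix SimpleGraph Finset

variable {V W : Type*}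

/-!
After reindexing its vertices by `Fin (m + 1) × V`, the adjacency matrix of `spl_m(G)` is the
Kronecker product `B_m ⊗ A(G)` with `B_m = [[1, 1ᵀ], [1, 0]]`, and that of `D_m(G)` is
`J_m ⊗ A(G)`. The eigenvalues of a Kronecker product of symmetric matrices are the pairwise
products of their eigenvalues, so energy is multiplicative under `⊗`. Since `J_3` has spectrum
`{3, 0, 0}` and `B_2` has spectrum `{2, -1, 0}`, both graphs have energy `3 ε(G)`, and
`3 ε(G) < 3p` exactly when `G` is hypoenergetic.
-/

open Polynomial Kronecker

namespace Matrix

theorem isHermitian_vecMulVec_self {n : Type*} (u : n → ℝ) : (vecMulVec u u).IsHermitian := by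
  ext i j
  simp [vecMulVec_apply, mul_comm]

variable {n m : Type*} [Fintype n] [DecidableEq n] [Fintype m] [DecidableEq m]

theorem charpoly_conj_of_mul_eq_one {R : Type*} [CommRing R] {P Q : Matrix n n R}
    (hPQ : P * Q = 1) (M : Matrix n n R) : (P * M * Q).charpoly = M.charpoly := by
  rw [mul_assoc, charpoly_mul_comm, mul_assoc, mul_eq_one_comm.mp hPQ, mul_one]

noncomputable def energy (A : Matrix n n ℝ) : ℝ :=
  (A.charpoly.roots.map (|·|)).sum

theorem energy_reindex (e : n ≃ m) (A : Matrix n n ℝ) : (reindex e e A).energy = A.energy := by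
  rw [energy, energy, charpoly_reindex]

theorem energy_conj_of_mul_eq_one {P Q : Matrix n n ℝ} (hPQ : P * Q = 1) (M : Matrix n n ℝ) :
    (P * M * Q).energy = M.energy := by
  rw [energy, energy, charpoly_conj_of_mul_eq_one hPQ]

theorem energy_diagonal (d : n → ℝ) : (diagonal d).energy = ∑ i, |d i| := by
  rw [energy, charpoly_diagonal,
    roots_prod _ _ (prod_ne_zero_iff.mpr fun i _ => X_sub_C_ne_zero _)]
  simp only [roots_X_sub_C, Multiset.bind_singleton, Multiset.map_map]
  rfl

theorem energy_eq_of_eq_conj_diagonal {M P Q : Matrix n n ℝ} {d : n → ℝ} (hPQ : P * Q = 1)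
    (hM : M = P * diagonal d * Q) : M.energy = ∑ i, |d i| := by
  rw [hM, energy_conj_of_mul_eq_one hPQ, energy_diagonal]

theorem energy_vecMulVec (u v : n → ℝ) : (vecMulVec u v).energy = |u ⬝ᵥ v| := by
  cases isEmpty_or_nonempty n
  · simp [energy, dotProduct]
  obtain ⟨k, hk⟩ : ∃ k, Fintype.card n = k + 1 :=
    Nat.exists_eq_succ_of_ne_zero Fintype.card_ne_zero
  have hchar : (vecMulVec u v).charpoly = X ^ k * (X - C (u ⬝ᵥ v)) := by
    rw [charpoly_vecMulVec, smul_eq_C_mul, hk, Nat.add_sub_cancel]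
    ring
  rw [energy, hchar, roots_mul (mul_ne_zero (pow_ne_zero _ X_ne_zero) (X_sub_C_ne_zero _)),
    roots_X_pow, roots_X_sub_C]
  simp [Multiset.map_nsmul, Multiset.sum_nsmul]

theorem IsHermitian.energy_eq {A : Matrix n n ℝ} (hA : A.IsHermitian) :
    A.energy = ∑ i, |hA.eigenvalues i| := by
  rw [energy, hA.roots_charpoly_eq_eigenvalues, Multiset.map_map]
  rfl

theorem IsHermitian.exists_conj_diagonal {A : Matrix n n ℝ} (hA : A.IsHermitian) :
    ∃ (U V : Matrix n n ℝ) (d : n → ℝ), U * V = 1 ∧ A = U * diagonal d * V := by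
  refine ⟨_, _, hA.eigenvalues, mem_unitaryGroup_iff.mp hA.eigenvectorUnitary.2, ?_⟩
  conv_lhs => rw [hA.spectral_theorem, Unitary.conjStarAlgAut_apply]
  rfl

theorem IsHermitian.energy_kronecker {M : Matrix m m ℝ} {A : Matrix n n ℝ} (hM : M.IsHermitian)
    (hA : A.IsHermitian) : (M ⊗ₖ A).energy = M.energy * A.energy := by
  obtain ⟨P, Q, d, hPQ, rfl⟩ := hM.exists_conj_diagonal
  obtain ⟨P', Q', d', hPQ', rfl⟩ := hA.exists_conj_diagonal
  have hconj : (P ⊗ₖ P') * (Q ⊗ₖ Q') = 1 := by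
    rw [← mul_kronecker_mul, hPQ, hPQ', one_kronecker_one]
  rw [mul_kronecker_mul, mul_kronecker_mul, diagonal_kronecker_diagonal,
    energy_eq_of_eq_conj_diagonal hconj rfl, energy_eq_of_eq_conj_diagonal hPQ rfl,
    energy_eq_of_eq_conj_diagonal hPQ' rfl, Fintype.sum_prod_type, sum_mul_sum]
  simp_rw [abs_mul]

end Matrix

theorem graphEnergy_eq_energy_adjMatrix [Fintype V] [DecidableEq V] (G : SimpleGraph V)
    [DecidableRel G.Adj] : graphEnergy G = (G.adjMatrix ℝ).energy := by
  rw [(adjMatrix_isHermitian G).energy_eq, graphEnergy]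
  congr!

theorem graphEnergy_eq_of_reindex_adjMatrix_eq_kronecker {m : Type*} [Fintype m] [DecidableEq m]
    [Fintype V] [DecidableEq V] [Fintype W] [DecidableEq W] {G : SimpleGraph V}
    [DecidableRel G.Adj] {H : SimpleGraph W} [DecidableRel H.Adj] (e : W ≃ m × V)
    {M : Matrix m m ℝ} (hM : M.IsHermitian)
    (h : reindex e e (H.adjMatrix ℝ) = M ⊗ₖ G.adjMatrix ℝ) :
    graphEnergy H = M.energy * graphEnergy G := by
  rw [graphEnergy_eq_energy_adjMatrix, graphEnergy_eq_energy_adjMatrix, ← energy_reindex e, h,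
    hM.energy_kronecker (adjMatrix_isHermitian G)]

theorem adjMatrix_shadowGraph (m : ℕ) [Fintype V] [DecidableEq V] (G : SimpleGraph V)
    [DecidableRel G.Adj] [DecidableRel (shadowGraph m G).Adj] :
    (shadowGraph m G).adjMatrix ℝ = vecMulVec 1 1 ⊗ₖ G.adjMatrix ℝ := by
  ext x y
  simp only [adjMatrix_apply, kroneckerMap_apply, vecMulVec_apply, Pi.one_apply, one_mul]
  congr!

theorem graphEnergy_shadowGraph (m : ℕ) [Fintype V] [DecidableEq V] (G : SimpleGraph V) :
    graphEnergy (shadowGraph m G) = m * graphEnergy G := by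
  classical
  rw [graphEnergy_eq_of_reindex_adjMatrix_eq_kronecker (Equiv.refl _)
    (isHermitian_vecMulVec_self 1) (adjMatrix_shadowGraph m G), energy_vecMulVec]
  simp

def splittingEquiv (m : ℕ) (V : Type*) : V ⊕ (Fin m × V) ≃ Fin (m + 1) × V where
  toFun := Sum.elim (fun v => (0, v)) fun iv => (iv.1.succ, iv.2)
  invFun x := Fin.cases (Sum.inl x.2) (fun i => Sum.inr (i, x.2)) x.1
  left_inv := by rintro (v | ⟨i, v⟩) <;> rfl
  right_inv := by rintro ⟨i, v⟩; cases i using Fin.cases <;> rfl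

def splittingPattern (m : ℕ) : Matrix (Fin (m + 1)) (Fin (m + 1)) ℝ :=
  of fun i j => if i = 0 ∨ j = 0 then 1 else 0

theorem isHermitian_splittingPattern (m : ℕ) : (splittingPattern m).IsHermitian := by
  ext i j
  simp [splittingPattern, or_comm]

theorem reindex_adjMatrix_splittingGraph (m : ℕ) [Fintype V] [DecidableEq V] (G : SimpleGraph V)
    [DecidableRel G.Adj] [DecidableRel (splittingGraph m G).Adj] :
    reindex (splittingEquiv m V) (splittingEquiv m V) ((splittingGraph m G).adjMatrix ℝ) =
      splittingPattern m ⊗ₖ G.adjMatrix ℝ := by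
  ext ⟨i, u⟩ ⟨j, v⟩
  cases i using Fin.cases <;> cases j using Fin.cases <;>
    simp [splittingEquiv, splittingPattern, adjMatrix_apply] <;> first | exact id | congr!

-- The columns of `P` are eigenvectors of `B_2` for the eigenvalues `2, -1, 0`, and `Q = P⁻¹`.
theorem energy_splittingPattern_two : (splittingPattern 2).energy = 3 := by
  rw [energy_eq_of_eq_conj_diagonal (P := !![2, 1, 0; 1, -1, 1; 1, -1, -1])
    (Q := !![1/3, 1/6, 1/6; 1/3, -1/3, -1/3; 0, 1/2, -1/2]) (d := ![2, -1, 0])]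
  · norm_num [Fin.sum_univ_succ]
  · rw [mul_fin_three, one_fin_three]
    norm_num
  · rw [diagonal_vec3, mul_fin_three, mul_fin_three]
    ext i j
    fin_cases i <;> fin_cases j <;> norm_num [splittingPattern]

theorem graphEnergy_splittingGraph_two [Fintype V] [DecidableEq V] (G : SimpleGraph V) :
    graphEnergy (splittingGraph 2 G) = 3 * graphEnergy G := by
  classical
  rw [graphEnergy_eq_of_reindex_adjMatrix_eq_kronecker (splittingEquiv 2 V)
    (isHermitian_splittingPattern 2) (reindex_adjMatrix_splittingGraph 2 G),
    energy_splittingPattern_two]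

/-- If `G` is a hypoenergetic graph of order `p`, then the 2-splitting graph
`spl₂(G)` and the 3-shadow graph `D₃(G)` are equihypoenergetic: both have
`3 * p` vertices, both have energy `3 · ε(G)`, and `3 · ε(G) < 3 * p`. -/
theorem splitting_shadow_equihypoenergetic [Fintype V] [DecidableEq V]
    (G : SimpleGraph V) (p : ℕ) (hp : Fintype.card V = p)
    (hyp : graphEnergy G < p) :
    Fintype.card (V ⊕ (Fin 2 × V)) = 3 * p ∧
      Fintype.card (Fin 3 × V) = 3 * p ∧
      graphEnergy (splittingGraph 2 G) = 3 * graphEnergy G ∧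
      graphEnergy (shadowGraph 3 G) = 3 * graphEnergy G ∧
      3 * graphEnergy G < 3 * (p : ℝ) := by
  refine ⟨?_, by simp [hp], graphEnergy_splittingGraph_two G, ?_, by linarith⟩
  · simp only [Fintype.card_sum, Fintype.card_prod, Fintype.card_fin, hp]
    ring
  · rw [graphEnergy_shadowGraph]
    norm_num
end
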